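/- Let P ∈ K[[u_1,…,u_r]][y] be a nonzero polynomial of degree at most d_y in y, and let y_0 = Σ_{n∈ℕ^r} c_n u^n ∈ K[[u_1,…,u_r]], with c_0 ≠ 0, be a simple root of P. Let k_0 ∈ ℕ^r be the ≤_grlex-smallest multi-index with i_{S(k_0)} = i_{k_0} − S(k_0) + S²(k_0); write P_{k_0}(u,y) = Σ_i π_{k_0,i}(y) u^i with π_{k_0,i} ∈ K[y], and set ω_0 := (π_{k_0,i_{k_0}})'(c_{S(k_0)}); then ω_0 ≠ 0. View K[[u]] inside the field K((u^{ℤ^r}))^{grlex} of generalized series. Then for every k ∈ ℕ^r with k >_grlex k_0, either the polynomial z_{S(k)} = Σ_{n ≤_grlex S(k)} c_n u^n is a root of P, or the element _kR(u,y) := P_k(u, y + c_{S(k)}) / (−ω_0 · u^{i_k}) can be written as _kR(u,y) = −y + _kQ(u,y), where _kQ(u,y) is a polynomial in y whose coefficients are series in K((u^{ℤ^r}))^{grlex} satisfying the Mod condition, with w(_kQ) >_grlex 0 and _kQ(u,0) ≠ 0 — so that y = _kQ(u,y) is a strongly reduced Henselian equation — and the generalized series t_{S(k)} := (y_0 − z_{S(k)})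 / u^{S(k)} satisfies t_{S(k)} = _kQ(u, t_{S(k)}). -/

import Mathlib

instance (r : ℕ) : WellFoundedLT (Fin r) := inferInstance

/-- `ℤ^r`, to be equipped with the graded lexicographic order. -/
def GrLexZ (r : ℕ) : Type := Fin r → ℤ

namespace GrLexZ

variable {r : ℕ}

instance : AddCommGroup (GrLexZ r) := inferInstanceAs (AddCommGroup (Fin r → ℤ))

/-- The underlying function of an element of `GrLexZ r`. -/
def toFun (a : GrLexZ r) : Fin r → ℤ := a

@[simp] theorem toFun_add (a b : GrLexZ r) : toFun (a + b) = toFun a + toFun b := rfl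

/-- The total degree `|a| = a₁ + ⋯ + a_r`. -/
def deg (a : GrLexZ r) : ℤ := ∑ i, toFun a i

theorem deg_add (a b : GrLexZ r) : deg (a + b) = deg a + deg b := by
  simp [deg, Finset.sum_add_distrib]

/-- The comparison key realizing the graded lexicographic order:
first the total degree, then the lexicographic order. -/
def key (a : GrLexZ r) : ℤ ×ₗ Lex (Fin r → ℤ) := toLex (deg a, toLex (toFun a))

theorem key_injective : Function.Injective (key (r := r)) := by
  intro a b h
  have h2 : (ofLex (key a)).2 = (ofLex (key b)).2 := by rw [h]
  exact h2

theorem key_add (a b : GrLexZ r) : key (a + b) = key a + key b := by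
  unfold key
  rw [deg_add]
  rfl

noncomputable instance : LinearOrder (GrLexZ r) := LinearOrder.lift' key key_injective

theorem le_iff_key {a b : GrLexZ r} : a ≤ b ↔ key a ≤ key b := Iff.rfl

instance : IsOrderedAddMonoid (GrLexZ r) :=
  { add_le_add_left := by
      intro a b hab c
      rw [le_iff_key, key_add, key_add]
      exact add_le_add (le_iff_key.mp hab) le_rfl }

end GrLexZ


open scoped Classical

/-- Total degree of a multi-index. -/
def degOf {r : ℕ} (a : Fin r →₀ ℕ) : ℕ := a.sum fun _ v => v

/-- Strict graded lexicographic order on `ℕ^r`. -/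
def grlt {r : ℕ} (a b : Fin r →₀ ℕ) : Prop :=
  degOf a < degOf b ∨ (degOf a = degOf b ∧ toLex a < toLex b)

/-- Graded lexicographic order on `ℕ^r`. -/
def grle {r : ℕ} (a b : Fin r →₀ ℕ) : Prop := grlt a b ∨ a = b

/-- `S` is the successor function of `(ℕ^r, ≤grlex)`. -/
def IsSucc {r : ℕ} (S : (Fin r →₀ ℕ) → (Fin r →₀ ℕ)) : Prop :=
  ∀ k, grlt k (S k) ∧ ∀ m, grlt k m → grle (S k) m

/-- The truncation `z_k = Σ_{n ≤grlex k} c_n u^n` of a power series. -/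
noncomputable def zk {K : Type*} [Field K] {r : ℕ}
    (y0 : MvPowerSeries (Fin r) K) (k : Fin r →₀ ℕ) : MvPowerSeries (Fin r) K :=
  fun n => if grle n k then MvPowerSeries.coeff (R := K) n y0 else 0

/-- `P_k(u,y) := P(u, z_k + u^(S k) · y)`. -/
noncomputable def Pk {K : Type*} [Field K] {r : ℕ}
    (P : Polynomial (MvPowerSeries (Fin r) K)) (y0 : MvPowerSeries (Fin r) K)
    (S : (Fin r →₀ ℕ) → (Fin r →₀ ℕ)) (k : Fin r →₀ ℕ) :
    Polynomial (MvPowerSeries (Fin r) K) :=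
  P.comp (Polynomial.C (zk y0 k) +
    Polynomial.C ((MvPowerSeries.monomial (R := K) (S k)) 1) * Polynomial.X)

/-- `d` is the valuation `w(Q)` of a polynomial `Q` with power series coefficients:
the `≤grlex`-least exponent appearing in some coefficient of `Q`. -/
def IsW {K : Type*} [Field K] {r : ℕ}
    (Q : Polynomial (MvPowerSeries (Fin r) K)) (d : Fin r →₀ ℕ) : Prop :=
  (∃ j, MvPowerSeries.coeff (R := K) d (Q.coeff j) ≠ 0) ∧
  ∀ e, grlt e d → ∀ j, MvPowerSeries.coeff (R := K) e (Q.coeff j) = 0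

/-- The set `ℕ^r ⊆ ℤ^r` is partially well ordered for the graded lexicographic order. -/
theorem nonneg_isPWO (r : ℕ) : {n : GrLexZ r | ∀ i, 0 ≤ GrLexZ.toFun n i}.IsPWO := by
  rw [Set.IsPWO, Set.partiallyWellOrderedOn_iff_exists_lt]
  intro f hf
  obtain ⟨m, n, hmn, hle⟩ :=
    (wellQuasiOrdered_le : @WellQuasiOrdered (Fin r → ℕ) (· ≤ ·))
      (fun k idx => (GrLexZ.toFun (f k) idx).toNat)
  refine ⟨m, n, hmn, ?_⟩
  have hptle : ∀ i, GrLexZ.toFun (f m) i ≤ GrLexZ.toFun (f n) i := by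
    intro i
    have h1 := hf m i
    have h2 := hf n i
    have h3 := hle i
    simp only at h3
    omega
  rcases eq_or_ne (f m) (f n) with h | h
  · exact le_of_eq h
  · show f m ≤ f n
    rw [GrLexZ.le_iff_key]
    have hdeg : GrLexZ.deg (f m) < GrLexZ.deg (f n) := by
      obtain ⟨i0, hi0⟩ : ∃ i, GrLexZ.toFun (f m) i ≠ GrLexZ.toFun (f n) i := by
        by_contra hc
        push_neg at hc
        exact h (funext hc)
      exact Finset.sum_lt_sum (fun i _ => hptle i)
        ⟨i0, Finset.mem_univ _, lt_of_le_of_ne (hptle i0) hi0⟩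
    exact le_of_lt (Prod.Lex.lt_iff.2 (Or.inl hdeg))

/-- The embedding of `K[[u₁,…,u_r]]` into the generalized series field
`K((u^(ℤ^r)))^grlex` (as a coefficient-preserving map). -/
noncomputable def emb {K : Type*} [Field K] {r : ℕ}
    (f : MvPowerSeries (Fin r) K) : HahnSeries (GrLexZ r) K where
  coeff n := if (∀ i, 0 ≤ GrLexZ.toFun n i) then
      MvPowerSeries.coeff (R := K)
        (Finsupp.equivFunOnFinite.symm fun i => (GrLexZ.toFun n i).toNat) f
    else 0
  isPWO_support' := (nonneg_isPWO r).mono fun n hn => by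
    simp only [Function.mem_support, ne_eq] at hn
    by_contra hc
    exact hn (if_neg hc)

/-- The inclusion `ℕ^r → ℤ^r`. -/
def incl {r : ℕ} (k : Fin r →₀ ℕ) : GrLexZ r := fun idx => (k idx : ℤ)

/-- The polynomial `π_{k,d}(y) ∈ K[y]` of coefficients of `u^d` in `Q ∈ K[[u]][y]`. -/
noncomputable def piPoly {K : Type*} [Field K] {r : ℕ}
    (Q : Polynomial (MvPowerSeries (Fin r) K)) (d : Fin r →₀ ℕ) : Polynomial K :=
  ∑ j ∈ Finset.range (Q.natDegree + 1),
    Polynomial.C (MvPowerSeries.coeff (R := K) d (Q.coeff j)) * Polynomial.X ^ j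

/-- The Mod condition for a generalized series with exponents in `ℤ^r`:
its support is contained in `c + ℕ^r` for some `c ∈ ℤ^r`. -/
def HasMod {r : ℕ} {K : Type*} [Field K] (x : HahnSeries (GrLexZ r) K) : Prop :=
  ∃ c : GrLexZ r, ∀ n ∈ x.support, ∀ idx, GrLexZ.toFun c idx ≤ GrLexZ.toFun n idx

/-! ### Auxiliary material -/

section GrlexAux

variable {r : ℕ}

/-- Comparison key for the graded lexicographic order on `ℕ^r`. -/
def keyN (a : Fin r →₀ ℕ) : ℕ ×ₗ Lex (Fin r →₀ ℕ) := toLex (degOf a, toLex a)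

theorem keyN_injective : Function.Injective (keyN (r := r)) := by
  intro a b h
  have h2 : (ofLex (keyN a)).2 = (ofLex (keyN b)).2 := by rw [h]
  exact congrArg ofLex h2

theorem grlt_iff_keyN {a b : Fin r →₀ ℕ} : grlt a b ↔ keyN a < keyN b := by
  rw [keyN, keyN, Prod.Lex.lt_iff]
  exact Iff.rfl

theorem grle_iff_keyN {a b : Fin r →₀ ℕ} : grle a b ↔ keyN a ≤ keyN b := by
  constructor
  · rintro (h | rfl)
    · exact (grlt_iff_keyN.mp h).le
    · exact le_rfl
  · intro h
    rcases eq_or_lt_of_le h with h | h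
    · exact Or.inr (keyN_injective h)
    · exact Or.inl (grlt_iff_keyN.mpr h)

theorem grle_refl (a : Fin r →₀ ℕ) : grle a a := Or.inr rfl

theorem grlt_irrefl (a : Fin r →₀ ℕ) : ¬ grlt a a := by
  rw [grlt_iff_keyN]; exact lt_irrefl _

theorem grlt_trans {a b c : Fin r →₀ ℕ} (h1 : grlt a b) (h2 : grlt b c) : grlt a c := by
  rw [grlt_iff_keyN] at *; exact lt_trans h1 h2

theorem grlt_of_grle_of_grlt {a b c : Fin r →₀ ℕ} (h1 : grle a b) (h2 : grlt b c) : grlt a c := by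
  rw [grle_iff_keyN] at h1; rw [grlt_iff_keyN] at *; exact lt_of_le_of_lt h1 h2

theorem grlt_of_grlt_of_grle {a b c : Fin r →₀ ℕ} (h1 : grlt a b) (h2 : grle b c) : grlt a c := by
  rw [grle_iff_keyN] at h2; rw [grlt_iff_keyN] at *; exact lt_of_lt_of_le h1 h2

theorem grle_trans {a b c : Fin r →₀ ℕ} (h1 : grle a b) (h2 : grle b c) : grle a c := by
  rw [grle_iff_keyN] at *; exact le_trans h1 h2

theorem grle_antisymm {a b : Fin r →₀ ℕ} (h1 : grle a b) (h2 : grle b a) : a = b := by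
  rw [grle_iff_keyN] at *; exact keyN_injective (le_antisymm h1 h2)

theorem grlt_trichotomy (a b : Fin r →₀ ℕ) : grlt a b ∨ a = b ∨ grlt b a := by
  rcases lt_trichotomy (keyN a) (keyN b) with h | h | h
  · exact Or.inl (grlt_iff_keyN.mpr h)
  · exact Or.inr (Or.inl (keyN_injective h))
  · exact Or.inr (Or.inr (grlt_iff_keyN.mpr h))

theorem grle_of_not_grlt {a b : Fin r →₀ ℕ} (h : ¬ grlt a b) : grle b a := by
  rcases grlt_trichotomy a b with h1 | rfl | h1
  · exact absurd h1 h
  · exact grle_refl a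
  · exact Or.inl h1

theorem not_grlt_of_grle {a b : Fin r →₀ ℕ} (h : grle a b) : ¬ grlt b a := by
  rw [grle_iff_keyN] at h; rw [grlt_iff_keyN]; exact not_lt_of_ge h

theorem grlt_ne {a b : Fin r →₀ ℕ} (h : grlt a b) : a ≠ b := by
  rintro rfl; exact grlt_irrefl a h

theorem grle_S_iff {S : (Fin r →₀ ℕ) → (Fin r →₀ ℕ)} (hS : IsSucc S) {n k : Fin r →₀ ℕ} :
    grle n (S k) ↔ (grle n k ∨ n = S k) := by
  constructor
  · intro h
    rcases grlt_trichotomy n k with h1 | rfl | h1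
    · exact Or.inl (Or.inl h1)
    · exact Or.inl (grle_refl n)
    · right
      exact grle_antisymm h ((hS k).2 n h1)
  · rintro (h | rfl)
    · exact grle_trans h (Or.inl (hS k).1)
    · exact grle_refl _

end GrlexAux

section InclAux

variable {r : ℕ}

theorem GrLexZ.lt_iff_key {a b : GrLexZ r} : a < b ↔ key a < key b := by
  rw [lt_iff_le_not_ge, lt_iff_le_not_ge, GrLexZ.le_iff_key, GrLexZ.le_iff_key]

@[simp] theorem incl_toFun (a : Fin r →₀ ℕ) (i : Fin r) :
    GrLexZ.toFun (incl a) i = (a i : ℤ) := rfl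

theorem incl_add (a b : Fin r →₀ ℕ) : incl (a + b) = incl a + incl b := by
  funext i
  show ((a + b) i : ℤ) = (a i : ℤ) + (b i : ℤ)
  push_cast [Finsupp.add_apply]
  ring

theorem degOf_eq_sum (a : Fin r →₀ ℕ) : degOf a = ∑ i, a i := by
  rw [degOf]
  exact Finsupp.sum_fintype _ _ (fun _ => rfl)

theorem deg_incl (a : Fin r →₀ ℕ) : GrLexZ.deg (incl a) = (degOf a : ℤ) := by
  rw [GrLexZ.deg, degOf_eq_sum]
  push_cast
  rfl

theorem incl_lt_incl {a b : Fin r →₀ ℕ} (h : grlt a b) : incl a < incl b := by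
  rw [GrLexZ.lt_iff_key, GrLexZ.key, GrLexZ.key, Prod.Lex.lt_iff]
  rcases h with h | ⟨h1, h2⟩
  · left
    show GrLexZ.deg (incl a) < GrLexZ.deg (incl b)
    rw [deg_incl, deg_incl]
    exact_mod_cast h
  · right
    have hdeg : GrLexZ.deg (incl a) = GrLexZ.deg (incl b) := by
      rw [deg_incl, deg_incl]; exact_mod_cast h1
    refine ⟨hdeg, ?_⟩
    obtain ⟨j, hj1, hj2⟩ := Finsupp.lex_def.mp h2
    refine ⟨j, fun d hd => ?_, ?_⟩
    · show (a d : ℤ) = (b d : ℤ)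
      exact_mod_cast hj1 d hd
    · show (a j : ℤ) < (b j : ℤ)
      exact_mod_cast hj2

theorem incl_injective : Function.Injective (incl (r := r)) := by
  intro a b h
  ext i
  have : (a i : ℤ) = (b i : ℤ) := congrFun h i
  exact_mod_cast this

theorem incl_le_incl {a b : Fin r →₀ ℕ} (h : grle a b) : incl a ≤ incl b := by
  rcases h with h | rfl
  · exact (incl_lt_incl h).le
  · exact le_rfl

theorem grlt_of_incl_lt {a b : Fin r →₀ ℕ} (h : incl a < incl b) : grlt a b := by
  rcases grlt_trichotomy a b with h1 | rfl | h1
  · exact h1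
  · exact absurd h (lt_irrefl _)
  · exact absurd (incl_lt_incl h1) (not_lt_of_ge h.le)

theorem grle_of_incl_le {a b : Fin r →₀ ℕ} (h : incl a ≤ incl b) : grle a b := by
  rcases eq_or_lt_of_le h with h1 | h1
  · exact Or.inr (incl_injective h1)
  · exact Or.inl (grlt_of_incl_lt h1)

/-- The natural-number part of a componentwise-nonnegative element of `ℤ^r`. -/
noncomputable def natPart (n : GrLexZ r) : Fin r →₀ ℕ :=
  Finsupp.equivFunOnFinite.symm fun i => (GrLexZ.toFun n i).toNat

theorem natPart_incl (a : Fin r →₀ ℕ) : natPart (incl a) = a := by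
  ext i
  show ((a i : ℤ)).toNat = a i
  exact Int.toNat_natCast _

theorem incl_natPart {n : GrLexZ r} (h : ∀ i, 0 ≤ GrLexZ.toFun n i) : incl (natPart n) = n := by
  funext i
  show ((natPart n) i : ℤ) = n i
  have : (natPart n) i = (GrLexZ.toFun n i).toNat := by
    simp [natPart]
  rw [this]
  exact Int.toNat_of_nonneg (h i)

theorem nonneg_of_comp_nonneg {n : GrLexZ r} (h : ∀ i, 0 ≤ GrLexZ.toFun n i) : 0 ≤ n := by
  have h0 : (0 : GrLexZ r) = incl 0 := by
    funext i; show (0 : ℤ) = ((0 : Fin r →₀ ℕ) i : ℤ); simp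
  rw [h0, ← incl_natPart h]
  apply incl_le_incl
  rw [grle_iff_keyN]
  rcases eq_or_ne (natPart n) 0 with he | he
  · rw [he]
  · apply le_of_lt
    rw [← grlt_iff_keyN, grlt]
    left
    rw [degOf_eq_sum, degOf_eq_sum]
    simp only [Finsupp.coe_zero, Pi.zero_apply, Finset.sum_const_zero]
    have : ∃ i, natPart n i ≠ 0 := by
      by_contra hc
      push_neg at hc
      exact he (Finsupp.ext fun i => hc i)
    obtain ⟨i, hi⟩ := this
    exact Finset.sum_pos' (fun _ _ => Nat.zero_le _)
      ⟨i, Finset.mem_univ i, Nat.pos_of_ne_zero hi⟩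

theorem incl_nonneg (a : Fin r →₀ ℕ) : 0 ≤ incl a :=
  nonneg_of_comp_nonneg (fun i => by simp)

theorem comp_nonneg_of_coeff_ne_zero {K : Type*} [Field K] {f : MvPowerSeries (Fin r) K}
    {n : GrLexZ r} (h : (emb f).coeff n ≠ 0) : ∀ i, 0 ≤ GrLexZ.toFun n i := by
  by_contra hc
  exact h (by simp only [emb, if_neg hc])

end InclAux

section EmbAux

variable {K : Type*} [Field K] {r : ℕ}

theorem emb_coeff_of_nonneg {f : MvPowerSeries (Fin r) K} {n : GrLexZ r}
    (h : ∀ i, 0 ≤ GrLexZ.toFun n i) :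
    (emb f).coeff n = MvPowerSeries.coeff (R := K) (natPart n) f := by
  simp only [emb, if_pos h]
  rfl

theorem emb_coeff_incl (f : MvPowerSeries (Fin r) K) (a : Fin r →₀ ℕ) :
    (emb f).coeff (incl a) = MvPowerSeries.coeff (R := K) a f := by
  rw [emb_coeff_of_nonneg (fun i => by simp), natPart_incl]

theorem emb_zero : emb (0 : MvPowerSeries (Fin r) K) = 0 := by
  ext n
  by_cases h : ∀ i, 0 ≤ GrLexZ.toFun n i
  · rw [emb_coeff_of_nonneg h]; simp
  · exact if_neg h

theorem emb_add (f g : MvPowerSeries (Fin r) K) : emb (f + g) = emb f + emb g := by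
  ext n
  by_cases h : ∀ i, 0 ≤ GrLexZ.toFun n i
  · rw [HahnSeries.coeff_add, emb_coeff_of_nonneg h, emb_coeff_of_nonneg h,
      emb_coeff_of_nonneg h, map_add]
  · rw [HahnSeries.coeff_add]
    have h1 : (emb (f + g)).coeff n = 0 := if_neg h
    have h2 : (emb f).coeff n = 0 := if_neg h
    have h3 : (emb g).coeff n = 0 := if_neg h
    rw [h1, h2, h3, add_zero]

theorem emb_monomial (a : Fin r →₀ ℕ) (c : K) :
    emb (MvPowerSeries.monomial (R := K) a c) = HahnSeries.single (incl a) c := by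
  ext n
  by_cases h : ∀ i, 0 ≤ GrLexZ.toFun n i
  · rw [emb_coeff_of_nonneg h, MvPowerSeries.coeff_monomial, HahnSeries.coeff_single]
    have : natPart n = a ↔ n = incl a := by
      constructor
      · intro hh; rw [← incl_natPart h, hh]
      · intro hh; rw [hh, natPart_incl]
    by_cases h2 : natPart n = a
    · rw [if_pos h2, if_pos (this.mp h2)]
    · rw [if_neg h2, if_neg (fun hc => h2 (this.mpr hc))]
  · rw [show (emb (MvPowerSeries.monomial (R := K) a c)).coeff n = 0 from if_neg h,
      HahnSeries.coeff_single, if_neg]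
    intro hc
    exact h (hc ▸ fun i => by simp)

theorem emb_one : emb (1 : MvPowerSeries (Fin r) K) = 1 := by
  have h1 : (1 : MvPowerSeries (Fin r) K) = MvPowerSeries.monomial (R := K) 0 1 := by
    ext n
    rw [MvPowerSeries.coeff_monomial, MvPowerSeries.coeff_one]
  have h2 : (incl (0 : Fin r →₀ ℕ)) = (0 : GrLexZ r) := by
    funext i; show (((0 : Fin r →₀ ℕ)) i : ℤ) = 0; simp
  rw [h1, emb_monomial, h2]
  rfl

theorem emb_injective : Function.Injective (emb (K := K) (r := r)) := by
  intro f g h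
  ext n
  have := congrArg (fun x => HahnSeries.coeff x (incl n)) h
  simpa only [emb_coeff_incl] using this

theorem emb_mul (f g : MvPowerSeries (Fin r) K) : emb (f * g) = emb f * emb g := by
  ext n
  by_cases h : ∀ i, 0 ≤ GrLexZ.toFun n i
  · set n' := natPart n with hn'
    have hincl : incl n' = n := incl_natPart h
    rw [HahnSeries.coeff_mul, emb_coeff_of_nonneg h, MvPowerSeries.coeff_mul]
    set T := (Finset.HasAntidiagonal.antidiagonal n').filter
      (fun p => MvPowerSeries.coeff (R := K) p.1 f ≠ 0 ∧ MvPowerSeries.coeff (R := K) p.2 g ≠ 0) with hT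
    have hL : ∑ p ∈ Finset.HasAntidiagonal.antidiagonal n',
        MvPowerSeries.coeff (R := K) p.1 f * MvPowerSeries.coeff (R := K) p.2 g
        = ∑ p ∈ T, MvPowerSeries.coeff (R := K) p.1 f * MvPowerSeries.coeff (R := K) p.2 g := by
      rw [hT]
      refine (Finset.sum_filter_of_ne ?_).symm
      intro p _ hp
      constructor
      · intro hc; exact hp (by rw [hc, zero_mul])
      · intro hc; exact hp (by rw [hc, mul_zero])
    have hset : Finset.antidiagonal (emb f).isPWO_support (emb g).isPWO_support n
        = T.image (fun p => (incl p.1, incl p.2)) := by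
      ext q
      simp only [Finset.mem_antidiagonal, Finset.mem_image, hT, Finset.mem_filter,
        Finset.HasAntidiagonal.mem_antidiagonal]
      constructor
      · rintro ⟨hq1, hq2, hq3⟩
        have h1 : ∀ i, 0 ≤ GrLexZ.toFun q.1 i := comp_nonneg_of_coeff_ne_zero hq1
        have h2 : ∀ i, 0 ≤ GrLexZ.toFun q.2 i := comp_nonneg_of_coeff_ne_zero hq2
        refine ⟨(natPart q.1, natPart q.2), ⟨?_, ?_, ?_⟩, ?_⟩
        · apply incl_injective
          rw [incl_add, incl_natPart h1, incl_natPart h2, hq3, hincl]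
        · rw [← emb_coeff_of_nonneg h1]; exact hq1
        · rw [← emb_coeff_of_nonneg h2]; exact hq2
        · rw [incl_natPart h1, incl_natPart h2]
      · rintro ⟨p, ⟨hp1, hp2, hp3⟩, rfl⟩
        refine ⟨?_, ?_, ?_⟩
        · show (emb f).coeff (incl p.1) ≠ 0
          rw [emb_coeff_incl]; exact hp2
        · show (emb g).coeff (incl p.2) ≠ 0
          rw [emb_coeff_incl]; exact hp3
        · show incl p.1 + incl p.2 = n
          rw [← incl_add, hp1, hincl]
    rw [hset, Finset.sum_image (fun p _ q _ hpq => ?_), hL]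
    · apply Finset.sum_congr rfl
      intro p _
      rw [emb_coeff_incl, emb_coeff_incl]
    · have e1 : incl p.1 = incl q.1 := congrArg Prod.fst hpq
      have e2 : incl p.2 = incl q.2 := congrArg Prod.snd hpq
      exact Prod.ext (incl_injective e1) (incl_injective e2)
  · rw [show (emb (f * g)).coeff n = 0 from if_neg h, HahnSeries.coeff_mul]
    refine (Finset.sum_eq_zero ?_).symm
    intro q hq
    rw [Finset.mem_addAntidiagonal] at hq
    exfalso
    apply h
    intro i
    have h1 := comp_nonneg_of_coeff_ne_zero hq.1 i
    have h2 := comp_nonneg_of_coeff_ne_zero hq.2.1 i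
    have h3 : GrLexZ.toFun n i = GrLexZ.toFun q.1 i + GrLexZ.toFun q.2 i := by
      rw [← hq.2.2]; rfl
    omega

/-- `emb` as a ring homomorphism. -/
noncomputable def embHom : MvPowerSeries (Fin r) K →+* HahnSeries (GrLexZ r) K where
  toFun := emb
  map_one' := emb_one
  map_mul' := emb_mul
  map_zero' := emb_zero
  map_add' := emb_add

@[simp] theorem embHom_apply (f : MvPowerSeries (Fin r) K) : embHom f = emb f := rfl

end EmbAux

section InMAux

variable {K : Type*} [Field K] {r : ℕ}

/-- `InM μ x` : all exponents in the support of `x` are `≥ μ`. -/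
def InM (μ : GrLexZ r) (x : HahnSeries (GrLexZ r) K) : Prop :=
  ∀ e, e < μ → x.coeff e = 0

/-- `InMs μ x` : all exponents in the support of `x` are `> μ`. -/
def InMs (μ : GrLexZ r) (x : HahnSeries (GrLexZ r) K) : Prop :=
  ∀ e, e ≤ μ → x.coeff e = 0

theorem InM_of_InMs {μ : GrLexZ r} {x : HahnSeries (GrLexZ r) K} (h : InMs μ x) : InM μ x :=
  fun e he => h e he.le

theorem InMs_of_InM_of_lt {μ ν : GrLexZ r} {x : HahnSeries (GrLexZ r) K} (hlt : ν < μ)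
    (h : InM μ x) : InMs ν x := fun e he => h e (lt_of_le_of_lt he hlt)

theorem InM_mono {μ ν : GrLexZ r} {x : HahnSeries (GrLexZ r) K} (hle : ν ≤ μ)
    (h : InM μ x) : InM ν x := fun e he => h e (lt_of_lt_of_le he hle)

theorem InM_zero (μ : GrLexZ r) : InM μ (0 : HahnSeries (GrLexZ r) K) := fun _ _ => rfl

theorem InMs_zero (μ : GrLexZ r) : InMs μ (0 : HahnSeries (GrLexZ r) K) := fun _ _ => rfl

theorem InM_add {μ : GrLexZ r} {x y : HahnSeries (GrLexZ r) K} (hx : InM μ x) (hy : InM μ y) :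
    InM μ (x + y) := fun e he => by
  rw [HahnSeries.coeff_add, hx e he, hy e he, add_zero]

theorem InMs_add {μ : GrLexZ r} {x y : HahnSeries (GrLexZ r) K} (hx : InMs μ x) (hy : InMs μ y) :
    InMs μ (x + y) := fun e he => by
  rw [HahnSeries.coeff_add, hx e he, hy e he, add_zero]

theorem InM_neg {μ : GrLexZ r} {x : HahnSeries (GrLexZ r) K} (hx : InM μ x) : InM μ (-x) :=
  fun e he => by rw [HahnSeries.coeff_neg, hx e he, neg_zero]

theorem InM_smul {μ : GrLexZ r} {x : HahnSeries (GrLexZ r) K} (c : K) (hx : InM μ x) :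
    InM μ ((HahnSeries.single (0 : GrLexZ r) c) * x) := fun e he => by
  have h0 := HahnSeries.coeff_single_mul_add (r := c) (x := x) (a := e) (b := (0 : GrLexZ r))
  rw [add_zero] at h0
  rw [h0, hx e he, mul_zero]

/-- Additive coefficient extraction hom. -/
def coeffHom (e : GrLexZ r) : HahnSeries (GrLexZ r) K →+ K where
  toFun x := x.coeff e
  map_zero' := rfl
  map_add' _ _ := rfl

theorem hahn_sum_coeff {ι : Type*} (s : Finset ι) (f : ι → HahnSeries (GrLexZ r) K)
    (e : GrLexZ r) : (∑ i ∈ s, f i).coeff e = ∑ i ∈ s, (f i).coeff e :=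
  map_sum (coeffHom e) f s

theorem InM_sum {ι : Type*} {s : Finset ι} {f : ι → HahnSeries (GrLexZ r) K} {μ : GrLexZ r}
    (h : ∀ i ∈ s, InM μ (f i)) : InM μ (∑ i ∈ s, f i) := fun e he => by
  rw [hahn_sum_coeff]
  exact Finset.sum_eq_zero fun i hi => h i hi e he

theorem InMs_sum {ι : Type*} {s : Finset ι} {f : ι → HahnSeries (GrLexZ r) K} {μ : GrLexZ r}
    (h : ∀ i ∈ s, InMs μ (f i)) : InMs μ (∑ i ∈ s, f i) := fun e he => by
  rw [hahn_sum_coeff]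
  exact Finset.sum_eq_zero fun i hi => h i hi e he

theorem InM_mul {μ ν : GrLexZ r} {x y : HahnSeries (GrLexZ r) K} (hx : InM μ x) (hy : InM ν y) :
    InM (μ + ν) (x * y) := by
  intro e he
  rw [HahnSeries.coeff_mul]
  refine Finset.sum_eq_zero fun q hq => ?_
  rw [Finset.mem_addAntidiagonal] at hq
  exfalso
  have h1 : μ ≤ q.1 := by
    by_contra hc
    exact hq.1 (hx q.1 (not_le.mp hc))
  have h2 : ν ≤ q.2 := by
    by_contra hc
    exact hq.2.1 (hy q.2 (not_le.mp hc))
  have : μ + ν ≤ e := hq.2.2 ▸ add_le_add h1 h2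
  exact absurd he (not_lt_of_ge this)

theorem InMs_mul_left {μ ν : GrLexZ r} {x y : HahnSeries (GrLexZ r) K} (hx : InMs μ x)
    (hy : InM ν y) : InMs (μ + ν) (x * y) := by
  intro e he
  rw [HahnSeries.coeff_mul]
  refine Finset.sum_eq_zero fun q hq => ?_
  rw [Finset.mem_addAntidiagonal] at hq
  exfalso
  have h1 : μ < q.1 := by
    by_contra hc
    exact hq.1 (hx q.1 (not_lt.mp hc))
  have h2 : ν ≤ q.2 := by
    by_contra hc
    exact hq.2.1 (hy q.2 (not_le.mp hc))
  have : μ + ν < e := hq.2.2 ▸ add_lt_add_of_lt_of_le h1 h2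
  exact absurd he (not_le_of_gt this)

theorem coeff_mul_of_InM {μ ν : GrLexZ r} {x y : HahnSeries (GrLexZ r) K} (hx : InM μ x)
    (hy : InM ν y) : (x * y).coeff (μ + ν) = x.coeff μ * y.coeff ν := by
  rw [HahnSeries.coeff_mul]
  rw [Finset.sum_eq_single (μ, ν)]
  · intro q hq hne
    rw [Finset.mem_addAntidiagonal] at hq
    exfalso
    apply hne
    have h1 : μ ≤ q.1 := by
      by_contra hc
      exact hq.1 (hx q.1 (not_le.mp hc))
    have h2 : ν ≤ q.2 := by
      by_contra hc
      exact hq.2.1 (hy q.2 (not_le.mp hc))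
    have hq1 : q.1 = μ := by
      by_contra hc
      have : μ < q.1 := lt_of_le_of_ne h1 (Ne.symm hc)
      have : μ + ν < q.1 + q.2 := add_lt_add_of_lt_of_le this h2
      rw [hq.2.2] at this
      exact absurd this (lt_irrefl _)
    have hq2 : q.2 = ν := by
      have := hq.2.2
      rw [hq1] at this
      exact add_left_cancel this
    exact Prod.ext hq1 hq2
  · intro hnot
    rw [Finset.mem_addAntidiagonal] at hnot
    push_neg at hnot
    by_cases h1 : x.coeff μ = 0
    · rw [h1, zero_mul]
    by_cases h2 : y.coeff ν = 0
    · rw [h2, mul_zero]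
    exact absurd rfl (hnot h1 h2)

theorem InM_single {μ : GrLexZ r} (c : K) : InM μ (HahnSeries.single μ c) := by
  intro e he
  exact HahnSeries.coeff_single_of_ne (ne_of_lt he)

theorem InM_emb_zero (f : MvPowerSeries (Fin r) K) : InM 0 (emb f) := by
  intro e he
  by_cases h : ∀ i, 0 ≤ GrLexZ.toFun e i
  · exact absurd (nonneg_of_comp_nonneg h) (not_le_of_gt he)
  · exact if_neg h

theorem InM_emb_incl {d : Fin r →₀ ℕ} {f : MvPowerSeries (Fin r) K}
    (h : ∀ e, grlt e d → MvPowerSeries.coeff (R := K) e f = 0) : InM (incl d) (emb f) := by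
  intro e he
  by_cases hn : ∀ i, 0 ≤ GrLexZ.toFun e i
  · rw [emb_coeff_of_nonneg hn]
    apply h
    apply grlt_of_incl_lt
    rw [incl_natPart hn]
    exact he
  · exact if_neg hn

/-- `PInM μ A` : all coefficients of the polynomial `A` are in `InM μ`. -/
def PInM (μ : GrLexZ r) (A : Polynomial (HahnSeries (GrLexZ r) K)) : Prop :=
  ∀ j, InM μ (A.coeff j)

/-- `PInMs μ A` : all coefficients of the polynomial `A` are in `InMs μ`. -/
def PInMs (μ : GrLexZ r) (A : Polynomial (HahnSeries (GrLexZ r) K)) : Prop :=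
  ∀ j, InMs μ (A.coeff j)

theorem PInM_mul {μ ν : GrLexZ r} {A B : Polynomial (HahnSeries (GrLexZ r) K)}
    (hA : PInM μ A) (hB : PInM ν B) : PInM (μ + ν) (A * B) := by
  intro j
  rw [Polynomial.coeff_mul]
  exact InM_sum fun q _ => InM_mul (hA q.1) (hB q.2)

theorem PInMs_mul_left {μ ν : GrLexZ r} {A B : Polynomial (HahnSeries (GrLexZ r) K)}
    (hA : PInMs μ A) (hB : PInM ν B) : PInMs (μ + ν) (A * B) := by
  intro j
  rw [Polynomial.coeff_mul]
  exact InMs_sum fun q _ => InMs_mul_left (hA q.1) (hB q.2)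

theorem PInM_one : PInM (0 : GrLexZ r) (1 : Polynomial (HahnSeries (GrLexZ r) K)) := by
  intro j
  rw [Polynomial.coeff_one]
  by_cases hj : j = 0
  · rw [if_pos hj]
    intro e he
    rw [HahnSeries.coeff_one, if_neg (ne_of_lt he)]
  · rw [if_neg hj]
    exact InM_zero 0

theorem PInM_pow {B : Polynomial (HahnSeries (GrLexZ r) K)} (hB : PInM 0 B) (m : ℕ) :
    PInM (0 : GrLexZ r) (B ^ m) := by
  induction m with
  | zero => simpa using PInM_one
  | succ m ih =>
    rw [pow_succ]
    have := PInM_mul ih hB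
    rwa [add_zero] at this

theorem PInM_comp {μ : GrLexZ r} {A B : Polynomial (HahnSeries (GrLexZ r) K)}
    (hA : PInM μ A) (hB : PInM 0 B) : PInM μ (A.comp B) := by
  rw [Polynomial.comp_eq_sum_left]
  rw [Polynomial.sum]
  intro j
  rw [Polynomial.finset_sum_coeff]
  refine InM_sum fun m _ => ?_
  rw [Polynomial.coeff_C_mul]
  have h2 := InM_mul (hA m) (PInM_pow hB m j)
  rwa [add_zero] at h2

end InMAux

section Main

open Polynomial

variable {K : Type*} [Field K] {r : ℕ}

/-- The shifted polynomial `T_k(u,y) = P_k(u, y + c_{S(k)})`. -/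
noncomputable def TT (P : Polynomial (MvPowerSeries (Fin r) K)) (y0 : MvPowerSeries (Fin r) K)
    (S : (Fin r →₀ ℕ) → (Fin r →₀ ℕ)) (k : Fin r →₀ ℕ) :
    Polynomial (MvPowerSeries (Fin r) K) :=
  (Pk P y0 S k).comp (Polynomial.X + Polynomial.C
    ((MvPowerSeries.C (σ := Fin r) (R := K)) (MvPowerSeries.coeff (R := K) (S k) y0)))

/-- `τ_k := (y₀ - z_{S(k)})/u^{S(k)}` as a generalized series. -/
noncomputable def tau (y0 : MvPowerSeries (Fin r) K)
    (S : (Fin r →₀ ℕ) → (Fin r →₀ ℕ)) (k : Fin r →₀ ℕ) : HahnSeries (GrLexZ r) K :=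
  HahnSeries.single (-(incl (S k))) (1 : K) * emb (y0 - zk y0 (S k))

/-- `σ_k := (y₀ - z_{S(k)})/u^{S(S(k))}` as a generalized series. -/
noncomputable def sig (y0 : MvPowerSeries (Fin r) K)
    (S : (Fin r →₀ ℕ) → (Fin r →₀ ℕ)) (k : Fin r →₀ ℕ) : HahnSeries (GrLexZ r) K :=
  HahnSeries.single (-(incl (S (S k)))) (1 : K) * emb (y0 - zk y0 (S k))

/-- `δ_k := S(S(k)) - S(k) ∈ ℤ^r`. -/
noncomputable def dlt {r : ℕ} (S : (Fin r →₀ ℕ) → (Fin r →₀ ℕ)) (k : Fin r →₀ ℕ) : GrLexZ r :=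
  incl (S (S k)) - incl (S k)

variable (P : Polynomial (MvPowerSeries (Fin r) K)) (y0 : MvPowerSeries (Fin r) K)
  (S : (Fin r →₀ ℕ) → (Fin r →₀ ℕ))

theorem coeff_zk (k n : Fin r →₀ ℕ) :
    MvPowerSeries.coeff (R := K) n (zk y0 k) =
      if grle n k then MvPowerSeries.coeff (R := K) n y0 else 0 := rfl

theorem coeff_sub_zk (k n : Fin r →₀ ℕ) :
    MvPowerSeries.coeff (R := K) n (y0 - zk y0 k) =
      if grle n k then 0 else MvPowerSeries.coeff (R := K) n y0 := by
  rw [map_sub, coeff_zk]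
  by_cases h : grle n k
  · rw [if_pos h, if_pos h, sub_self]
  · rw [if_neg h, if_neg h, sub_zero]

theorem zk_succ (hS : IsSucc S) (k : Fin r →₀ ℕ) :
    zk y0 (S k) = zk y0 k + MvPowerSeries.monomial (R := K) (S k) (MvPowerSeries.coeff (R := K) (S k) y0) := by
  ext n
  rw [coeff_zk, map_add, coeff_zk, MvPowerSeries.coeff_monomial]
  by_cases h1 : grle n k
  · have hne : n ≠ S k := by
      rintro rfl
      exact not_grlt_of_grle h1 (hS k).1
    rw [if_pos ((grle_S_iff hS).mpr (Or.inl h1)), if_pos h1, if_neg hne, add_zero]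
  · by_cases h2 : n = S k
    · rw [if_pos ((grle_S_iff hS).mpr (Or.inr h2)), if_neg h1, if_pos h2, zero_add, h2]
    · rw [if_neg, if_neg h1, if_neg h2, add_zero]
      intro hc
      rcases (grle_S_iff hS).mp hc with h | h
      · exact h1 h
      · exact h2 h

theorem dlt_pos (hS : IsSucc S) (k : Fin r →₀ ℕ) : 0 < dlt S k :=
  sub_pos.mpr (incl_lt_incl (hS (S k)).1)

theorem InM_emb_sub_zk (hS : IsSucc S) (k : Fin r →₀ ℕ) :
    InM (incl (S (S k))) (emb (y0 - zk y0 (S k))) := by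
  apply InM_emb_incl
  intro e he
  rw [coeff_sub_zk]
  by_cases h : grle e (S k)
  · rw [if_pos h]
  · exfalso
    have h1 : grlt (S k) e := by
      rcases grle_of_not_grlt (fun hc => h (Or.inl hc)) with h2 | h2
      · exact h2
      · exact absurd (Or.inr h2.symm) h
    exact not_grlt_of_grle ((hS (S k)).2 e h1) he

theorem sig_InM (hS : IsSucc S) (k : Fin r →₀ ℕ) : InM 0 (sig y0 S k) := by
  have h := InM_mul (InM_single (μ := -(incl (S (S k)))) (1 : K))
    (InM_emb_sub_zk y0 S hS k)
  rwa [neg_add_cancel] at h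

theorem tau_eq_single_mul (k : Fin r →₀ ℕ) :
    tau y0 S k = HahnSeries.single (dlt S k) (1 : K) * sig y0 S k := by
  have he : dlt S k + -(incl (S (S k))) = -(incl (S k)) := by rw [dlt]; abel
  rw [tau, sig, ← mul_assoc, HahnSeries.single_mul_single, one_mul, he]

theorem tau_InM_dlt (hS : IsSucc S) (k : Fin r →₀ ℕ) : InM (dlt S k) (tau y0 S k) := by
  rw [tau_eq_single_mul]
  have h := InM_mul (InM_single (μ := dlt S k) (1 : K)) (sig_InM y0 S hS k)
  rwa [add_zero] at h

theorem tau_InMs (hS : IsSucc S) (k : Fin r →₀ ℕ) : InMs 0 (tau y0 S k) :=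
  InMs_of_InM_of_lt (dlt_pos S hS k) (tau_InM_dlt y0 S hS k)

theorem incl_zero : incl (0 : Fin r →₀ ℕ) = (0 : GrLexZ r) := by
  funext i
  show (((0 : Fin r →₀ ℕ)) i : ℤ) = 0
  simp

theorem emb_C (c : K) :
    emb ((MvPowerSeries.C (σ := Fin r) (R := K)) c) = HahnSeries.single (0 : GrLexZ r) c := by
  rw [← MvPowerSeries.monomial_zero_eq_C_apply, emb_monomial, incl_zero]

/-- The image of `P_k` in `K((u^(ℤ^r)))[y]`. -/
noncomputable def PkH (k : Fin r →₀ ℕ) : Polynomial (HahnSeries (GrLexZ r) K) :=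
  (Pk P y0 S k).map embHom

/-- The image of `T_k` in `K((u^(ℤ^r)))[y]`. -/
noncomputable def TTH (k : Fin r →₀ ℕ) : Polynomial (HahnSeries (GrLexZ r) K) :=
  (TT P y0 S k).map embHom

theorem TTH_eq (k : Fin r →₀ ℕ) :
    TTH P y0 S k = (PkH P y0 S k).comp
      (Polynomial.X + Polynomial.C (HahnSeries.single (0 : GrLexZ r)
        (MvPowerSeries.coeff (R := K) (S k) y0))) := by
  rw [TTH, TT, Polynomial.map_comp, PkH, Polynomial.map_add, Polynomial.map_X,
    Polynomial.map_C, embHom_apply, emb_C]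

theorem PkH_eq (k : Fin r →₀ ℕ) :
    PkH P y0 S k = (P.map embHom).comp
      (Polynomial.C (emb (zk y0 k)) +
        Polynomial.C (HahnSeries.single (incl (S k)) (1 : K)) * Polynomial.X) := by
  rw [PkH, Pk, Polynomial.map_comp, Polynomial.map_add, Polynomial.map_C,
    Polynomial.map_mul, Polynomial.map_C, Polynomial.map_X, embHom_apply, embHom_apply,
    emb_monomial]

theorem PkH_succ (hS : IsSucc S) (k : Fin r →₀ ℕ) :
    PkH P y0 S (S k) = (TTH P y0 S k).comp
      (Polynomial.C (HahnSeries.single (dlt S k) (1 : K)) * Polynomial.X) := by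
  have e1 : (HahnSeries.single (incl (S k)) (1:K)) * (HahnSeries.single (dlt S k) 1)
      = HahnSeries.single (incl (S (S k))) 1 := by
    rw [HahnSeries.single_mul_single, one_mul, dlt, add_sub_cancel]
  have e2 : (HahnSeries.single (incl (S k)) (1:K)) *
      (HahnSeries.single (0 : GrLexZ r) (MvPowerSeries.coeff (R := K) (S k) y0))
      = HahnSeries.single (incl (S k)) (MvPowerSeries.coeff (R := K) (S k) y0) := by
    rw [HahnSeries.single_mul_single, add_zero, one_mul]
  have e3 : emb (zk y0 (S k)) = emb (zk y0 k) +
      HahnSeries.single (incl (S k)) (MvPowerSeries.coeff (R := K) (S k) y0) := by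
    rw [zk_succ y0 S hS k, emb_add, emb_monomial]
  rw [TTH_eq, Polynomial.comp_assoc, PkH_eq P y0 S (S k), PkH_eq P y0 S k,
    Polynomial.comp_assoc]
  congr 1
  simp only [Polynomial.add_comp, Polynomial.mul_comp, Polynomial.C_comp, Polynomial.X_comp]
  rw [e3, mul_add, ← mul_assoc, ← Polynomial.C_mul, e1, ← Polynomial.C_mul, e2,
    Polynomial.C_add]
  ring

theorem eval_TTH (hS : IsSucc S) (hroot : Polynomial.eval y0 P = 0) (k : Fin r →₀ ℕ) :
    Polynomial.eval (tau y0 S k) (TTH P y0 S k) = 0 := by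
  rw [TTH, Polynomial.eval_map, TT, Polynomial.eval₂_comp, Pk, Polynomial.eval₂_comp]
  have h1 : Polynomial.eval₂ embHom (tau y0 S k)
      (Polynomial.X + Polynomial.C ((MvPowerSeries.C (σ := Fin r) (R := K))
        (MvPowerSeries.coeff (R := K) (S k) y0))) =
      tau y0 S k + HahnSeries.single (0 : GrLexZ r) (MvPowerSeries.coeff (R := K) (S k) y0) := by
    rw [Polynomial.eval₂_add, Polynomial.eval₂_X, Polynomial.eval₂_C, embHom_apply, emb_C]
  rw [h1]
  have h2 : Polynomial.eval₂ embHom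
      (tau y0 S k + HahnSeries.single (0 : GrLexZ r) (MvPowerSeries.coeff (R := K) (S k) y0))
      (Polynomial.C (zk y0 k) +
        Polynomial.C ((MvPowerSeries.monomial (R := K) (S k)) 1) * Polynomial.X) =
      embHom y0 := by
    rw [Polynomial.eval₂_add, Polynomial.eval₂_C, Polynomial.eval₂_mul, Polynomial.eval₂_C,
      Polynomial.eval₂_X]
    rw [mul_add, embHom_apply, embHom_apply, emb_monomial]
    rw [tau, ← mul_assoc, HahnSeries.single_mul_single, add_neg_cancel, one_mul,
      HahnSeries.single_zero_one, one_mul, HahnSeries.single_mul_single, add_zero, one_mul]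
    rw [← emb_monomial, ← emb_add, ← emb_add, embHom_apply]
    congr 1
    rw [zk_succ y0 S hS k]
    ring
  rw [h2, Polynomial.eval₂_hom, hroot, map_zero]

theorem hahn_natCast (n : ℕ) :
    ((n : ℕ) : HahnSeries (GrLexZ r) K) = HahnSeries.single (0 : GrLexZ r) ((n : K)) := by
  have h := map_natCast (HahnSeries.C : K →+* HahnSeries (GrLexZ r) K) n
  rw [← h]
  rfl

theorem coeff_comp_linear (A : Polynomial (HahnSeries (GrLexZ r) K))
    (b : HahnSeries (GrLexZ r) K) (j : ℕ) :
    (A.comp (Polynomial.X + Polynomial.C b)).coeff j =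
      ∑ m ∈ A.support, (A.coeff m) * (b ^ (m - j) * ((m.choose j : ℕ) : HahnSeries (GrLexZ r) K)) := by
  rw [Polynomial.comp_eq_sum_left, Polynomial.sum, Polynomial.finset_sum_coeff]
  refine Finset.sum_congr rfl fun m _ => ?_
  rw [Polynomial.coeff_C_mul, Polynomial.coeff_X_add_C_pow]

theorem coeff_coeff_comp_single {A : Polynomial (HahnSeries (GrLexZ r) K)} {μ : GrLexZ r}
    (hA : PInM μ A) (c : K) (j : ℕ) :
    ((A.comp (Polynomial.X + Polynomial.C (HahnSeries.single (0 : GrLexZ r) c))).coeff j).coeff μ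
      = ∑ m ∈ A.support, (m.choose j : K) * ((A.coeff m).coeff μ) * c ^ (m - j) := by
  rw [coeff_comp_linear, hahn_sum_coeff]
  refine Finset.sum_congr rfl fun m _ => ?_
  have hy : (HahnSeries.single (0 : GrLexZ r) c) ^ (m - j) *
      ((m.choose j : ℕ) : HahnSeries (GrLexZ r) K)
      = HahnSeries.single (0 : GrLexZ r) (c ^ (m - j) * (m.choose j : K)) := by
    rw [HahnSeries.single_pow, smul_zero, hahn_natCast, HahnSeries.single_mul_single, add_zero]
  rw [hy]
  have h2 := coeff_mul_of_InM (hA m)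
    (InM_single (μ := (0 : GrLexZ r)) (c ^ (m - j) * (m.choose j : K)))
  rw [add_zero] at h2
  rw [h2, HahnSeries.coeff_single_same]
  ring

theorem PInM_X_add_C_single (c : K) :
    PInM (0 : GrLexZ r) (Polynomial.X + Polynomial.C (HahnSeries.single (0 : GrLexZ r) c)) := by
  intro j e he
  rw [Polynomial.coeff_add, Polynomial.coeff_X, Polynomial.coeff_C]
  have h1 : (HahnSeries.single (0 : GrLexZ r) c).coeff e = 0 :=
    HahnSeries.coeff_single_of_ne (ne_of_lt he)
  by_cases hj1 : j = 1
  · rw [if_pos hj1.symm]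
    have hj0 : j ≠ 0 := by rw [hj1]; exact one_ne_zero
    rw [if_neg hj0, add_zero, HahnSeries.coeff_one, if_neg (ne_of_lt he)]
  · rw [if_neg (fun hc => hj1 hc.symm), zero_add]
    by_cases hj0 : j = 0
    · rw [if_pos hj0]; exact h1
    · rw [if_neg hj0]; rfl

theorem PInM_TTH {k : Fin r →₀ ℕ} {μ : GrLexZ r} (h : PInM μ (PkH P y0 S k)) :
    PInM μ (TTH P y0 S k) := by
  rw [TTH_eq]
  exact PInM_comp h (PInM_X_add_C_single _)

theorem W_transfer {k : Fin r →₀ ℕ} {d : Fin r →₀ ℕ} (hw : IsW (Pk P y0 S k) d) :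
    PInM (incl d) (PkH P y0 S k) ∧
      ∃ j, ((PkH P y0 S k).coeff j).coeff (incl d) ≠ 0 := by
  constructor
  · intro j
    rw [PkH, Polynomial.coeff_map, embHom_apply]
    exact InM_emb_incl fun e he => hw.2 e he j
  · obtain ⟨j, hj⟩ := hw.1
    refine ⟨j, ?_⟩
    rw [PkH, Polynomial.coeff_map, embHom_apply, emb_coeff_incl]
    exact hj

theorem iota_unique {k : Fin r →₀ ℕ} {d : Fin r →₀ ℕ} (hw : IsW (Pk P y0 S k) d)
    {μ : GrLexZ r} (h1 : PInM μ (PkH P y0 S k))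
    (h2 : ∃ j, ((PkH P y0 S k).coeff j).coeff μ ≠ 0) : μ = incl d := by
  obtain ⟨ht1, ht2⟩ := W_transfer P y0 S hw
  rcases lt_trichotomy μ (incl d) with h | h | h
  · obtain ⟨j, hj⟩ := h2
    exact absurd (ht1 j μ h) hj
  · exact h
  · obtain ⟨j, hj⟩ := ht2
    exact absurd (h1 j (incl d) h) hj

theorem InM_one : InM (0 : GrLexZ r) (1 : HahnSeries (GrLexZ r) K) := by
  intro e he
  rw [HahnSeries.coeff_one, if_neg (ne_of_lt he)]

theorem InM_pow0 {x : HahnSeries (GrLexZ r) K} (hx : InM 0 x) (n : ℕ) : InM 0 (x ^ n) := by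
  induction n with
  | zero => simpa using InM_one
  | succ n ih =>
    rw [pow_succ]
    have := InM_mul ih hx
    rwa [add_zero] at this

theorem InM_eval {A : Polynomial (HahnSeries (GrLexZ r) K)} {μ : GrLexZ r} (hA : PInM μ A)
    {x : HahnSeries (GrLexZ r) K} (hx : InM 0 x) : InM μ (A.eval x) := by
  rw [Polynomial.eval_eq_sum, Polynomial.sum]
  refine InM_sum fun m _ => ?_
  have := InM_mul (hA m) (InM_pow0 hx m)
  rwa [add_zero] at this

theorem PInM_divX {A : Polynomial (HahnSeries (GrLexZ r) K)} {μ : GrLexZ r} (hA : PInM μ A) :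
    PInM μ A.divX := by
  intro j
  rw [Polynomial.coeff_divX]
  exact hA (j + 1)

theorem coeff_comp_C_mul_X (A : Polynomial (HahnSeries (GrLexZ r) K))
    (s : HahnSeries (GrLexZ r) K) (m : ℕ) :
    (A.comp (Polynomial.C s * Polynomial.X)).coeff m = s ^ m * A.coeff m := by
  rw [Polynomial.comp_eq_sum_left, Polynomial.sum, Polynomial.finset_sum_coeff]
  rw [Finset.sum_eq_single m]
  · rw [mul_pow, ← Polynomial.C_pow, ← mul_assoc, ← Polynomial.C_mul, Polynomial.coeff_C_mul,
      Polynomial.coeff_X_pow, if_pos rfl, mul_one, mul_comm]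
  · intro e _ hne
    rw [mul_pow, ← Polynomial.C_pow, ← mul_assoc, ← Polynomial.C_mul, Polynomial.coeff_C_mul,
      Polynomial.coeff_X_pow, if_neg (fun hc => hne hc.symm), mul_zero]
  · intro hm
    simp [Polynomial.notMem_support_iff.mp hm]

/-- `g_k := (T_k/y)(τ_k)`, the evaluated quotient of `T_k` by its constant term. -/
noncomputable def gq (P : Polynomial (MvPowerSeries (Fin r) K)) (y0 : MvPowerSeries (Fin r) K)
    (S : (Fin r →₀ ℕ) → (Fin r →₀ ℕ)) (k : Fin r →₀ ℕ) : HahnSeries (GrLexZ r) K :=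
  (TTH P y0 S k).divX.eval (tau y0 S k)

theorem TTH_coeff_zero_eq (hS : IsSucc S) (hroot : Polynomial.eval y0 P = 0) (k : Fin r →₀ ℕ) :
    (TTH P y0 S k).coeff 0 = -(tau y0 S k * gq P y0 S k) := by
  have h := congrArg (Polynomial.eval (tau y0 S k)) (Polynomial.X_mul_divX_add (TTH P y0 S k))
  rw [Polynomial.eval_add, Polynomial.eval_mul, Polynomial.eval_X, Polynomial.eval_C,
    eval_TTH P y0 S hS hroot k] at h
  rw [← gq] at h
  exact (neg_eq_of_add_eq_zero_right h).symm

theorem InM_gq (hS : IsSucc S) {k : Fin r →₀ ℕ} {μ : GrLexZ r} (hT : PInM μ (TTH P y0 S k)) :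
    InM μ (gq P y0 S k) :=
  InM_eval (PInM_divX hT) (InM_of_InMs (tau_InMs y0 S hS k))

theorem coeff_gq (hS : IsSucc S) {k : Fin r →₀ ℕ} {μ : GrLexZ r} (hT : PInM μ (TTH P y0 S k)) :
    (gq P y0 S k).coeff μ = ((TTH P y0 S k).coeff 1).coeff μ := by
  set A := (TTH P y0 S k).divX with hA
  have h := congrArg (Polynomial.eval (tau y0 S k)) (Polynomial.X_mul_divX_add A)
  rw [Polynomial.eval_add, Polynomial.eval_mul, Polynomial.eval_X, Polynomial.eval_C] at h
  have h2 : gq P y0 S k = tau y0 S k * A.divX.eval (tau y0 S k) + A.coeff 0 := by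
    rw [gq, ← hA, ← h]
  rw [h2, HahnSeries.coeff_add]
  have h3 : InMs μ (tau y0 S k * A.divX.eval (tau y0 S k)) := by
    have h4 := InMs_mul_left (tau_InMs y0 S hS k)
      (InM_eval (PInM_divX (PInM_divX hT)) (InM_of_InMs (tau_InMs y0 S hS k)))
    rwa [zero_add] at h4
  rw [h3 μ le_rfl, zero_add, hA, Polynomial.coeff_divX, zero_add]

theorem sig_coeff_zero (hS : IsSucc S) (k : Fin r →₀ ℕ) :
    (sig y0 S k).coeff 0 = MvPowerSeries.coeff (R := K) (S (S k)) y0 := by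
  rw [sig]
  have h := HahnSeries.coeff_single_mul_add (r := (1:K)) (x := emb (y0 - zk y0 (S k)))
    (a := incl (S (S k))) (b := -(incl (S (S k))))
  rw [add_neg_cancel] at h
  rw [h, one_mul, emb_coeff_incl, coeff_sub_zk, if_neg]
  exact fun hc => not_grlt_of_grle hc (hS (S k)).1

theorem nsmul_dlt_le (hS : IsSucc S) (k : Fin r →₀ ℕ) {m : ℕ} (hm : 1 ≤ m) :
    dlt S k ≤ m • dlt S k := by
  calc dlt S k = 1 • dlt S k := (one_nsmul _).symm
    _ ≤ m • dlt S k := nsmul_le_nsmul_left (dlt_pos S hS k).le hm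

theorem nsmul_dlt_lt (hS : IsSucc S) (k : Fin r →₀ ℕ) {m : ℕ} (hm : 2 ≤ m) :
    dlt S k < m • dlt S k := by
  calc dlt S k = 1 • dlt S k := (one_nsmul _).symm
    _ < m • dlt S k := nsmul_lt_nsmul_left (dlt_pos S hS k) hm

/-- Key values of the coefficients of `P_{S(k)}` at level `ι_k + δ_k`. -/
theorem Vvals (hS : IsSucc S) (hroot : Polynomial.eval y0 P = 0)
    {k : Fin r →₀ ℕ} {ι : GrLexZ r} {ω0 : K}
    (hPk : PInM ι (PkH P y0 S k))
    (ha : ((TTH P y0 S k).coeff 1).coeff ι = ω0) :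
    PInM (ι + dlt S k) (PkH P y0 S (S k)) ∧
    ((PkH P y0 S (S k)).coeff 0).coeff (ι + dlt S k) =
      -(MvPowerSeries.coeff (R := K) (S (S k)) y0 * ω0) ∧
    ((PkH P y0 S (S k)).coeff 1).coeff (ι + dlt S k) = ω0 ∧
    (∀ m, 2 ≤ m → ((PkH P y0 S (S k)).coeff m).coeff (ι + dlt S k) = 0) := by
  set δ := dlt S k with hδ
  have hT : PInM ι (TTH P y0 S k) := PInM_TTH P y0 S hPk
  have hg : InM ι (gq P y0 S k) := InM_gq P y0 S hS hT
  have hcoeff : ∀ m, (PkH P y0 S (S k)).coeff m =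
      (HahnSeries.single δ (1:K)) ^ m * (TTH P y0 S k).coeff m := by
    intro m
    rw [PkH_succ P y0 S hS k, coeff_comp_C_mul_X]
  -- coefficient 0
  have hc0 : (PkH P y0 S (S k)).coeff 0 = (TTH P y0 S k).coeff 0 := by
    rw [hcoeff 0, pow_zero, one_mul]
  have hc0InM : InM (ι + δ) ((PkH P y0 S (S k)).coeff 0) := by
    rw [hc0, TTH_coeff_zero_eq P y0 S hS hroot k]
    apply InM_neg
    rw [tau_eq_single_mul]
    rw [mul_assoc]
    have h1 := InM_mul (InM_single (μ := δ) (1:K))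
      (by
        have := InM_mul (sig_InM y0 S hS k) hg
        rwa [zero_add] at this)
    rwa [add_comm δ ι] at h1
  have hc0val : ((PkH P y0 S (S k)).coeff 0).coeff (ι + δ) =
      -(MvPowerSeries.coeff (R := K) (S (S k)) y0 * ω0) := by
    rw [hc0, TTH_coeff_zero_eq P y0 S hS hroot k, tau_eq_single_mul, mul_assoc,
      HahnSeries.coeff_neg]
    have h1 := HahnSeries.coeff_single_mul_add (r := (1:K))
      (x := sig y0 S k * gq P y0 S k) (a := ι) (b := δ)
    rw [h1, one_mul]
    have h2 := coeff_mul_of_InM (sig_InM y0 S hS k) hg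
    rw [zero_add] at h2
    rw [h2, sig_coeff_zero y0 S hS k, coeff_gq P y0 S hS hT, ha]
  -- coefficients m ≥ 1
  have hcmInM : ∀ m, 1 ≤ m → InM (ι + m • δ) ((PkH P y0 S (S k)).coeff m) := by
    intro m hm
    rw [hcoeff m, HahnSeries.single_pow, one_pow]
    have h1 := InM_mul (InM_single (μ := m • δ) (1:K)) (hT m)
    rwa [add_comm] at h1
  have hPSk : PInM (ι + δ) (PkH P y0 S (S k)) := by
    intro m
    rcases Nat.eq_zero_or_pos m with rfl | hm
    · exact hc0InM
    · exact InM_mono (add_le_add_right (nsmul_dlt_le S hS k hm) ι) (hcmInM m hm)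
  have hc1val : ((PkH P y0 S (S k)).coeff 1).coeff (ι + δ) = ω0 := by
    rw [hcoeff 1, pow_one]
    have h1 := HahnSeries.coeff_single_mul_add (r := (1:K)) (x := (TTH P y0 S k).coeff 1)
      (a := ι) (b := δ)
    rw [h1, one_mul, ha]
  have hcmval : ∀ m, 2 ≤ m → ((PkH P y0 S (S k)).coeff m).coeff (ι + δ) = 0 := by
    intro m hm
    exact hcmInM m (le_trans one_le_two hm) (ι + δ)
      (add_lt_add_right (nsmul_dlt_lt S hS k hm) ι)
  exact ⟨hPSk, hc0val, hc1val, hcmval⟩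

theorem sum_support_pair {A : Polynomial (HahnSeries (GrLexZ r) K)} {μ : GrLexZ r}
    (hA2 : ∀ m, 2 ≤ m → ((A.coeff m)).coeff μ = 0)
    (c : K) (j : ℕ) :
    ∑ m ∈ A.support, (m.choose j : K) * ((A.coeff m).coeff μ) * c ^ (m - j)
      = (Nat.choose 0 j : K) * ((A.coeff 0).coeff μ) * c ^ (0 - j)
        + (Nat.choose 1 j : K) * ((A.coeff 1).coeff μ) * c ^ (1 - j) := by
  classical
  set F : ℕ → K := fun m => (m.choose j : K) * ((A.coeff m).coeff μ) * c ^ (m - j) with hF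
  have e1 : ∑ m ∈ A.support, F m = ∑ m ∈ A.support ∪ {0, 1}, F m := by
    refine Finset.sum_subset Finset.subset_union_left fun m _ hm => ?_
    rw [hF]
    simp only [Polynomial.notMem_support_iff.mp hm, HahnSeries.coeff_zero, mul_zero, zero_mul]
  have e2 : ∑ m ∈ ({0, 1} : Finset ℕ), F m = ∑ m ∈ A.support ∪ {0, 1}, F m := by
    refine Finset.sum_subset Finset.subset_union_right fun m _ hm => ?_
    have hm2 : 2 ≤ m := by
      simp only [Finset.mem_insert, Finset.mem_singleton] at hm
      push_neg at hm
      omega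
    rw [hF]
    simp only [hA2 m hm2, mul_zero, zero_mul]
  rw [e1, ← e2, hF]
  rw [Finset.sum_pair (by norm_num : (0:ℕ) ≠ 1)]

/-- The induction step: the stabilization of `ω` and `i` propagates to the successor. -/
theorem mainStep (hS : IsSucc S) (hroot : Polynomial.eval y0 P = 0)
    (i : (Fin r →₀ ℕ) → (Fin r →₀ ℕ)) (hi : ∀ k, IsW (Pk P y0 S k) (i k))
    {ω0 : K} (hω : ω0 ≠ 0) (k : Fin r →₀ ℕ)
    (ha : ((TTH P y0 S k).coeff 1).coeff (incl (i k)) = ω0) :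
    incl (i (S k)) = incl (i k) + dlt S k ∧
    ((TTH P y0 S (S k)).coeff 1).coeff (incl (i (S k))) = ω0 ∧
    (∀ j, j ≠ 1 → ((TTH P y0 S (S k)).coeff j).coeff (incl (i (S k))) = 0) := by
  obtain ⟨hPSk, hV0, hV1, hVm⟩ :=
    Vvals P y0 S hS hroot (W_transfer P y0 S (hi k)).1 ha
  set μ := incl (i k) + dlt S k with hμ
  have hι : incl (i (S k)) = μ :=
    (iota_unique P y0 S (hi (S k)) hPSk ⟨1, by rw [hV1]; exact hω⟩).symm
  have hext : ∀ j, ((TTH P y0 S (S k)).coeff j).coeff μ =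
      (Nat.choose 0 j : K) * (((PkH P y0 S (S k)).coeff 0).coeff μ) *
        (MvPowerSeries.coeff (R := K) (S (S k)) y0) ^ (0 - j)
      + (Nat.choose 1 j : K) * (((PkH P y0 S (S k)).coeff 1).coeff μ) *
        (MvPowerSeries.coeff (R := K) (S (S k)) y0) ^ (1 - j) := by
    intro j
    rw [TTH_eq, coeff_coeff_comp_single hPSk]
    exact sum_support_pair hVm _ j
  refine ⟨hι, ?_, ?_⟩
  · rw [hι, hext 1, hV0, hV1]
    norm_num
  · intro j hj
    rw [hι, hext j, hV0, hV1]
    rcases Nat.eq_zero_or_pos j with rfl | hj1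
    · norm_num
      ring
    · have hj2 : 2 ≤ j := by omega
      rw [Nat.choose_eq_zero_of_lt (by omega), Nat.choose_eq_zero_of_lt (by omega)]
      norm_num

/-- Identification of `ω₀` with the coefficient extraction from `T_{k₀}`. -/
theorem omega_base (i : (Fin r →₀ ℕ) → (Fin r →₀ ℕ)) (hi : ∀ k, IsW (Pk P y0 S k) (i k))
    (k : Fin r →₀ ℕ) :
    Polynomial.eval (MvPowerSeries.coeff (R := K) (S k) y0)
      (Polynomial.derivative (piPoly (Pk P y0 S k) (i k)))
      = ((TTH P y0 S k).coeff 1).coeff (incl (i k)) := by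
  set c := MvPowerSeries.coeff (R := K) (S k) y0 with hc
  set N := (Pk P y0 S k).natDegree with hN
  have hPk : PInM (incl (i k)) (PkH P y0 S k) := (W_transfer P y0 S (hi k)).1
  -- LHS computation
  have hL : Polynomial.eval c (Polynomial.derivative (piPoly (Pk P y0 S k) (i k)))
      = ∑ m ∈ Finset.range (N + 1),
        (m : K) * (MvPowerSeries.coeff (R := K) (i k) ((Pk P y0 S k).coeff m)) * c ^ (m - 1) := by
    rw [piPoly, Polynomial.derivative_sum, Polynomial.eval_finset_sum]
    refine Finset.sum_congr rfl fun m _ => ?_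
    rw [Polynomial.derivative_C_mul_X_pow, Polynomial.eval_mul, Polynomial.eval_C,
      Polynomial.eval_pow, Polynomial.eval_X]
    ring
  -- RHS computation
  have hValue : ∀ m, ((PkH P y0 S k).coeff m).coeff (incl (i k)) =
      MvPowerSeries.coeff (R := K) (i k) ((Pk P y0 S k).coeff m) := by
    intro m
    rw [PkH, Polynomial.coeff_map, embHom_apply, emb_coeff_incl]
  have hR : ((TTH P y0 S k).coeff 1).coeff (incl (i k)) =
      ∑ m ∈ (PkH P y0 S k).support,
        (m.choose 1 : K) * (((PkH P y0 S k).coeff m).coeff (incl (i k))) * c ^ (m - 1) := by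
    rw [TTH_eq, coeff_coeff_comp_single hPk]
  rw [hL, hR]
  have hsub : (PkH P y0 S k).support ⊆ Finset.range (N + 1) := by
    intro m hm
    rw [Finset.mem_range, Nat.lt_succ_iff, hN]
    apply Polynomial.le_natDegree_of_ne_zero
    intro hc0
    apply Polynomial.mem_support_iff.mp hm
    rw [PkH, Polynomial.coeff_map, hc0, map_zero]
  rw [Finset.sum_subset hsub]
  · refine (Finset.sum_congr rfl fun m _ => ?_)
    rw [hValue, Nat.choose_one_right]
  · intro m _ hm
    rw [Polynomial.notMem_support_iff.mp hm]
    simp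

theorem grlt_wf : WellFounded (fun a b : (Fin r →₀ ℕ) => grlt a b) := by
  have h : Subrelation (fun a b : (Fin r →₀ ℕ) => grlt a b)
      (InvImage (· < ·) (keyN (r := r))) := fun {a b} hab => grlt_iff_keyN.mp hab
  exact Subrelation.wf h (InvImage.wf keyN (wellFounded_lt))

theorem degOf_mono {a b : Fin r →₀ ℕ} (h : grlt a b) : degOf a ≤ degOf b := by
  rcases h with h | ⟨h, _⟩
  · exact h.le
  · exact h.le

theorem exists_pred (hS : IsSucc S) {k0 k : Fin r →₀ ℕ} (h : grlt k0 k) :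
    ∃ p, grle k0 p ∧ grlt p k ∧ S p = k := by
  classical
  set B : Set (Fin r →₀ ℕ) := {p | grle k0 p ∧ grlt p k} with hB
  have hfin : B.Finite := by
    have hpifin : (Set.pi Set.univ fun _ : Fin r => Set.Iic (degOf k)).Finite :=
      Set.Finite.pi fun _ => Set.finite_Iic _
    have hsub : B ⊆ (fun p : Fin r →₀ ℕ => (p : Fin r → ℕ)) ⁻¹'
        (Set.pi Set.univ fun _ : Fin r => Set.Iic (degOf k)) := by
      rintro p ⟨_, hpk⟩
      intro idx _
      have h1 : p idx ≤ degOf p := by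
        rw [degOf_eq_sum]
        exact Finset.single_le_sum (fun _ _ => Nat.zero_le _) (Finset.mem_univ idx)
      exact le_trans h1 (degOf_mono hpk)
    exact Set.Finite.subset (Set.Finite.preimage
      (DFunLike.coe_injective.injOn) hpifin) hsub
  have hne : (hfin.toFinset).Nonempty :=
    ⟨k0, by rw [Set.Finite.mem_toFinset]; exact ⟨grle_refl k0, h⟩⟩
  obtain ⟨p, hpmem, hpmax⟩ := Finset.exists_max_image hfin.toFinset keyN hne
  rw [Set.Finite.mem_toFinset] at hpmem
  obtain ⟨hk0p, hpk⟩ := hpmem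
  refine ⟨p, hk0p, hpk, ?_⟩
  rcases (hS p).2 k hpk with hlt | heq
  · exfalso
    have hmem : S p ∈ hfin.toFinset := by
      rw [Set.Finite.mem_toFinset]
      exact ⟨grle_trans hk0p (Or.inl (hS p).1), hlt⟩
    have hle := hpmax (S p) hmem
    exact absurd (grlt_iff_keyN.mp (hS p).1) (not_lt_of_ge hle)
  · exact heq

/-- The main induction: stabilization for all `k ≥ k₀`. -/
theorem main_ind (hS : IsSucc S) (hroot : Polynomial.eval y0 P = 0)
    (i : (Fin r →₀ ℕ) → (Fin r →₀ ℕ)) (hi : ∀ k, IsW (Pk P y0 S k) (i k))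
    {k0 : Fin r →₀ ℕ} {ω0 : K} (hω : ω0 ≠ 0)
    (hbase : ((TTH P y0 S k0).coeff 1).coeff (incl (i k0)) = ω0) :
    ∀ k, grle k0 k →
      ((TTH P y0 S k).coeff 1).coeff (incl (i k)) = ω0 ∧
      (grlt k0 k → ∀ j, j ≠ 1 → ((TTH P y0 S k).coeff j).coeff (incl (i k)) = 0) := by
  intro k
  induction k using (grlt_wf (r := r)).induction with
  | _ k IH =>
    intro hk0k
    rcases hk0k with hk0k | rfl
    swap
    · exact ⟨hbase, fun hc => absurd hc (grlt_irrefl _)⟩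
    obtain ⟨p, hk0p, hpk, hSp⟩ := exists_pred S hS hk0k
    have hIp := IH p hpk hk0p
    obtain ⟨_, ha, hc⟩ := mainStep P y0 S hS hroot i hi hω p hIp.1
    rw [hSp] at ha hc
    exact ⟨ha, fun _ => hc⟩

theorem ord_pos {x : HahnSeries (GrLexZ r) K} (hx : x ≠ 0) (h : InMs 0 x) : 0 < x.order := by
  by_contra hc
  push_neg at hc
  exact hx (HahnSeries.coeff_order_eq_zero.mp (h _ hc))

theorem single_neg_mul_coeff (s : K) (x : HahnSeries (GrLexZ r) K) (ι e : GrLexZ r) :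
    (HahnSeries.single (-ι) s * x).coeff e = s * x.coeff (e + ι) := by
  have h := HahnSeries.coeff_single_mul_add (r := s) (x := x) (a := e + ι) (b := -ι)
  rw [show e + ι + -ι = e by abel] at h
  exact h

theorem TT_coeff_zero (hS : IsSucc S) (k : Fin r →₀ ℕ) :
    (TT P y0 S k).coeff 0 = Polynomial.eval (zk y0 (S k)) P := by
  rw [TT, Polynomial.coeff_zero_eq_eval_zero, Polynomial.eval_comp, Polynomial.eval_add,
    Polynomial.eval_X, Polynomial.eval_C, zero_add, Pk, Polynomial.eval_comp,
    Polynomial.eval_add, Polynomial.eval_C, Polynomial.eval_mul, Polynomial.eval_C,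
    Polynomial.eval_X]
  congr 1
  rw [zk_succ y0 S hS k, ← MvPowerSeries.monomial_zero_eq_C_apply,
    MvPowerSeries.monomial_mul_monomial]
  simp

end Main

set_option maxHeartbeats 1000000 in
/-- **Reduction of a simple root to a strongly reduced Henselian equation.**
Let `y₀` (with `c₀ ≠ 0`) be a simple root of `P ∈ K[[u₁,…,u_r]][y]`, `deg_y P ≤ d_y`, and
let `k₀` be the least index with `i_{S(k₀)} = i_{k₀} − S(k₀) + S²(k₀)`.  Then
`ω₀ := (π_{k₀,i_{k₀}})'(c_{S(k₀)}) ≠ 0`, and for every `k >grlex k₀`, either `z_{S(k)}` is a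
root of `P`, or `P_k(u, y + c_{S(k)}) = (−ω₀ u^{i_k})·(−y + Q(u,y))` for a polynomial `Q`
with Mod coefficients, `w(Q) >grlex 0` and `Q(u,0) ≠ 0` (a strongly reduced Henselian
equation `y = Q(u,y)`), whose solution is `t_{S(k)} = (y₀ − z_{S(k)})/u^{S(k)}`. -/
theorem separation_to_strongly_reduced_henselian {K : Type*} [Field K] [CharZero K]
    {r : ℕ} (hr : 1 ≤ r) (dy : ℕ)
    (P : Polynomial (MvPowerSeries (Fin r) K)) (hP : P ≠ 0) (hdy : P.natDegree ≤ dy)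
    (y0 : MvPowerSeries (Fin r) K) (hc0 : MvPowerSeries.constantCoeff (σ := Fin r) (R := K) y0 ≠ 0)
    (hroot : Polynomial.eval y0 P = 0)
    (hsimple : Polynomial.eval y0 (Polynomial.derivative P) ≠ 0)
    (S : (Fin r →₀ ℕ) → (Fin r →₀ ℕ)) (hS : IsSucc S)
    (i : (Fin r →₀ ℕ) → (Fin r →₀ ℕ)) (hi : ∀ k, IsW (Pk P y0 S k) (i k))
    (k0 : Fin r →₀ ℕ)
    (hk0 : (i (S k0) + S k0 = i k0 + S (S k0)) ∧
      ∀ k, i (S k) + S k = i k + S (S k) → grle k0 k) :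
    Polynomial.eval (MvPowerSeries.coeff (R := K) (S k0) y0)
        (Polynomial.derivative (piPoly (Pk P y0 S k0) (i k0))) ≠ 0 ∧
    ∀ k, grlt k0 k →
      Polynomial.eval (zk y0 (S k)) P = 0 ∨
      ∃ Q : Polynomial (HahnSeries (GrLexZ r) K),
        (∀ j, HasMod (Q.coeff j)) ∧
        (∀ j, Q.coeff j ≠ 0 → 0 < (Q.coeff j).order) ∧
        Q.coeff 0 ≠ 0 ∧
        (Polynomial.C (HahnSeries.single (incl (i k))
            (-(Polynomial.eval (MvPowerSeries.coeff (R := K) (S k0) y0)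
              (Polynomial.derivative (piPoly (Pk P y0 S k0) (i k0)))))) *
          (-Polynomial.X + Q) =
          ∑ j ∈ Finset.range
            (((Pk P y0 S k).comp (Polynomial.X + Polynomial.C
              ((MvPowerSeries.C (σ := Fin r) (R := K)) (MvPowerSeries.coeff (R := K) (S k) y0)))).natDegree + 1),
            Polynomial.C (emb (((Pk P y0 S k).comp (Polynomial.X + Polynomial.C
              ((MvPowerSeries.C (σ := Fin r) (R := K)) (MvPowerSeries.coeff (R := K) (S k) y0)))).coeff j)) *
              Polynomial.X ^ j) ∧
        Polynomial.eval (HahnSeries.single (-(incl (S k))) 1 * emb (y0 - zk y0 (S k))) Q =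
          HahnSeries.single (-(incl (S k))) 1 * emb (y0 - zk y0 (S k)) := by
    classical
  have hωeq : Polynomial.eval (MvPowerSeries.coeff (R := K) (S k0) y0)
      (Polynomial.derivative (piPoly (Pk P y0 S k0) (i k0)))
      = ((TTH P y0 S k0).coeff 1).coeff (incl (i k0)) := omega_base P y0 S i hi k0
  rw [hωeq]
  set ω : K := ((TTH P y0 S k0).coeff 1).coeff (incl (i k0)) with hωset
  have hiota : incl (i (S k0)) = incl (i k0) + dlt S k0 := by
    have h' : incl (i (S k0)) + incl (S k0) = incl (i k0) + incl (S (S k0)) := by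
      rw [← incl_add, ← incl_add, hk0.1]
    have h2 : incl (i (S k0)) = incl (i (S k0)) + incl (S k0) - incl (S k0) := by abel
    rw [h2, h', dlt]
    abel
  have hω : ω ≠ 0 := by
    intro hzero
    have hbase0 : ((TTH P y0 S k0).coeff 1).coeff (incl (i k0)) = 0 := by
      rw [← hωset]; exact hzero
    obtain ⟨hPSk, hV0, hV1, hVm⟩ :=
      Vvals P y0 S hS hroot (W_transfer P y0 S (hi k0)).1 hbase0
    obtain ⟨j, hj⟩ := (W_transfer P y0 S (hi (S k0))).2
    rw [hiota] at hj
    rw [mul_zero, neg_zero] at hV0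
    rcases j with _ | _ | j
    · exact hj hV0
    · exact hj hV1
    · exact hj (hVm (j + 2) (by omega))
  have hind := main_ind P y0 S hS hroot i hi hω hωset.symm
  refine ⟨hω, ?_⟩
  intro k hk
  obtain ⟨ha, hcall⟩ := hind k (Or.inl hk)
  have hc0 := hcall hk
  by_cases hz : Polynomial.eval (zk y0 (S k)) P = 0
  · exact Or.inl hz
  right
  set A := (Pk P y0 S k).comp (Polynomial.X + Polynomial.C
      ((MvPowerSeries.C (σ := Fin r) (R := K)) (MvPowerSeries.coeff (R := K) (S k) y0))) with hAdef
  have hTA : TT P y0 S k = A := by rw [hAdef]; rfl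
  set R := ∑ j ∈ Finset.range (A.natDegree + 1),
      Polynomial.C (emb (A.coeff j)) * Polynomial.X ^ j with hRdef
  have hRT : R = TTH P y0 S k := by
    have hdeg : (TTH P y0 S k).natDegree < A.natDegree + 1 := by
      rw [← hTA, TTH]
      exact Nat.lt_succ_of_le Polynomial.natDegree_map_le
    rw [hRdef, Polynomial.as_sum_range' (TTH P y0 S k) (A.natDegree + 1) hdeg]
    refine Finset.sum_congr rfl fun j _ => ?_
    rw [← Polynomial.C_mul_X_pow_eq_monomial, TTH, Polynomial.coeff_map, embHom_apply, hTA]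
  have hTj : ∀ j, (TTH P y0 S k).coeff j = emb (A.coeff j) := by
    intro j
    rw [TTH, Polynomial.coeff_map, embHom_apply, hTA]
  set ι := incl (i k) with hι
  set ϖ := HahnSeries.single (-ι) (-ω⁻¹) with hϖ
  have hInM : ∀ j, InM ι (emb (A.coeff j)) := by
    intro j
    rw [← hTj]
    exact PInM_TTH P y0 S (W_transfer P y0 S (hi k)).1 j
  have hQcoeff : ∀ j, (Polynomial.X + Polynomial.C ϖ * R).coeff j
      = (if j = 1 then 1 else 0) + ϖ * emb (A.coeff j) := by
    intro j
    rw [Polynomial.coeff_add, Polynomial.coeff_C_mul, hRT, hTj, Polynomial.coeff_X]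
    congr 1
    by_cases h : j = 1
    · rw [if_pos h, if_pos h.symm]
    · rw [if_neg (fun hc => h hc.symm), if_neg h]
  have hQc : ∀ j e, ((Polynomial.X + Polynomial.C ϖ * R).coeff j).coeff e
      = (if j = 1 then (1 : HahnSeries (GrLexZ r) K) else 0).coeff e
        + (-ω⁻¹) * (emb (A.coeff j)).coeff (e + ι) := by
    intro j e
    rw [hQcoeff j, HahnSeries.coeff_add, hϖ, single_neg_mul_coeff]
  refine ⟨Polynomial.X + Polynomial.C ϖ * R, ?_, ?_, ?_, ?_, ?_⟩
  · -- Mod condition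
    intro j
    refine ⟨-ι, ?_⟩
    intro n hn idx
    rw [HahnSeries.mem_support, hQc j n] at hn
    have hne : (if j = 1 then (1 : HahnSeries (GrLexZ r) K) else 0).coeff n ≠ 0 ∨
        (-ω⁻¹) * (emb (A.coeff j)).coeff (n + ι) ≠ 0 := by
      by_contra hcon
      push_neg at hcon
      rw [hcon.1, hcon.2, add_zero] at hn
      exact hn rfl
    have hgoal : GrLexZ.toFun (-ι) idx = -(GrLexZ.toFun ι idx) := rfl
    have hgoal2 : GrLexZ.toFun ι idx = ((i k) idx : ℤ) := rfl
    rcases hne with hne | hne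
    · have hn0 : n = 0 := by
        by_cases hj : j = 1
        · rw [if_pos hj, HahnSeries.coeff_one] at hne
          by_contra hcn
          rw [if_neg hcn] at hne
          exact hne rfl
        · rw [if_neg hj] at hne
          exact absurd rfl hne
      rw [hn0, hgoal, hgoal2]
      have h00 : GrLexZ.toFun (0 : GrLexZ r) idx = 0 := rfl
      rw [h00]
      exact neg_nonpos.mpr (Int.natCast_nonneg _)
    · have hemb : (emb (A.coeff j)).coeff (n + ι) ≠ 0 :=
        fun hcc => hne (by rw [hcc, mul_zero])
      have hpos := comp_nonneg_of_coeff_ne_zero hemb idx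
      have hsplit : GrLexZ.toFun (n + ι) idx = GrLexZ.toFun n idx + GrLexZ.toFun ι idx := rfl
      rw [hsplit] at hpos
      rw [hgoal]
      linarith
  · -- positive orders
    intro j hne
    apply ord_pos hne
    intro e he
    rw [hQc j e]
    rcases lt_or_eq_of_le he with he | he
    · have helt : e + ι < ι := by
        have h1 := add_lt_add_left he ι
        rwa [zero_add] at h1
      rw [hInM j (e + ι) helt, mul_zero, add_zero]
      by_cases hj : j = 1
      · rw [if_pos hj, HahnSeries.coeff_one, if_neg (ne_of_lt he)]
      · rw [if_neg hj]
        rfl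
    · rw [he, zero_add]
      by_cases hj : j = 1
      · rw [if_pos hj, HahnSeries.coeff_one, if_pos rfl]
        have h1 : (emb (A.coeff j)).coeff ι = ω := by
          rw [← hTj, hj]
          exact ha
        rw [h1, neg_mul, inv_mul_cancel₀ hω, add_neg_cancel]
      · rw [if_neg hj]
        have h1 : (emb (A.coeff j)).coeff ι = 0 := by
          rw [← hTj]
          exact hc0 j hj
        rw [h1, mul_zero, add_zero, HahnSeries.coeff_zero]
  · -- nonzero constant coefficient
    rw [hQcoeff 0, if_neg (by decide : ¬(0:ℕ) = 1), zero_add]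
    apply mul_ne_zero
    · rw [hϖ]
      exact HahnSeries.single_ne_zero (neg_ne_zero.mpr (inv_ne_zero hω))
    · intro hcz
      apply hz
      rw [← TT_coeff_zero P y0 S hS k, hTA]
      exact emb_injective (by rw [hcz, emb_zero])
  · -- the defining equation
    have e1 : -Polynomial.X + (Polynomial.X + Polynomial.C ϖ * R) = Polynomial.C ϖ * R :=
      neg_add_cancel_left _ _
    rw [e1, ← mul_assoc, ← Polynomial.C_mul, hϖ, HahnSeries.single_mul_single,
      add_neg_cancel, neg_mul_neg, mul_inv_cancel₀ hω, HahnSeries.single_zero_one, map_one,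
      one_mul]
  · -- the fixed-point equation
    have htau : HahnSeries.single (-(incl (S k))) (1 : K) * emb (y0 - zk y0 (S k))
        = tau y0 S k := rfl
    rw [htau, Polynomial.eval_add, Polynomial.eval_X, Polynomial.eval_mul, Polynomial.eval_C,
      hRT, eval_TTH P y0 S hS hroot k, mul_zero, add_zero]
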